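/- arXiv:1903.10799 — 2 statements merged into one kernel-verified Lean document; each statement's English description precedes it below -/
import Mathlib

section
/- Let f : ℝ → ℝ be 2π-periodic and continuously differentiable with ∫_{−π}^{π} f(t) dt = 0. Then sup_{x∈ℝ} |f(x)| ≤ (π/2)·sup_{x∈ℝ} |f′(x)|. Moreover, the constant π/2 cannot be replaced by any smaller constant: for every c < π/2 there exists such a function f with sup |f| > c·sup |f′|. -/
/-!
If `|f'| ≤ M`, then `f (x + t) ≥ f x - M |t|`; integrating over the period `[-T/2, T/2]`
centred at `x` and using that `f` has mean zero gives `0 ≥ T f x - M T² / 4`, i.e.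
`f x ≤ M T / 4`, which is `(π/2) M` for `T = 2π`. The constant is approached by
`arcsin (r sin x)` as `r → 1`: these odd functions have `|f'| ≤ 1` and maximum `arcsin r`,
and they converge to the triangle wave.
-/

open Real Function Set
open scoped NNReal

theorem intervalIntegral.integral_abs_eq_sq {c : ℝ} (hc : 0 ≤ c) :
    ∫ t in -c..c, |t| = c ^ 2 := by
  have hright : ∫ t in 0..c, |t| = c ^ 2 / 2 := by
    rw [intervalIntegral.integral_congr fun t ht => abs_of_nonneg (uIcc_of_le hc ▸ ht).1,
      integral_id]
    ring
  have hleft : ∫ t in -c..0, |t| = c ^ 2 / 2 := by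
    have h := intervalIntegral.integral_comp_neg (a := 0) (b := c) (fun t => |t|)
    simp only [abs_neg, neg_zero] at h
    rw [← h, hright]
  rw [← intervalIntegral.integral_add_adjacent_intervals (b := 0)
    (continuous_abs.intervalIntegrable _ _) (continuous_abs.intervalIntegrable _ _), hleft, hright]
  ring

theorem LipschitzWith.le_of_periodic_of_integral_eq_zero {f : ℝ → ℝ} {K : ℝ≥0} {T a : ℝ}
    (hf : LipschitzWith K f) (hper : Periodic f T) (hT : 0 < T)
    (hmean : ∫ t in a..a + T, f t = 0) (x : ℝ) : f x ≤ K * T / 4 := by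
  have hshift : ∫ t in -(T / 2)..T / 2, f (x + t) = 0 := by
    rw [intervalIntegral.integral_comp_add_left, ← hmean,
      show x + T / 2 = x + -(T / 2) + T by ring]
    exact hper.intervalIntegral_add_eq _ _
  have hbound : ∀ t, f x - K * |t| ≤ f (x + t) := fun t => by
    have := (abs_le.1 (hf.dist_le_mul (x + t) x)).1
    rw [Real.dist_eq, add_sub_cancel_left] at this
    linarith
  have hint : ∫ t in -(T / 2)..T / 2, (f x - K * |t|) ≤ ∫ t in -(T / 2)..T / 2, f (x + t) :=
    intervalIntegral.integral_mono_on (by linarith)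
      ((continuous_const.sub (continuous_const.mul continuous_abs)).intervalIntegrable _ _)
      ((hf.continuous.comp (continuous_const_add x)).intervalIntegrable _ _) fun t _ => hbound t
  rw [hshift, intervalIntegral.integral_sub (g := fun t => (K : ℝ) * |t|) intervalIntegrable_const
      ((continuous_const.mul continuous_abs).intervalIntegrable _ _),
    intervalIntegral.integral_const_mul, intervalIntegral.integral_abs_eq_sq (by linarith),
    intervalIntegral.integral_const, smul_eq_mul] at hint
  nlinarith

theorem LipschitzWith.abs_le_of_periodic_of_integral_eq_zero {f : ℝ → ℝ} {K : ℝ≥0} {T a : ℝ}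
    (hf : LipschitzWith K f) (hper : Periodic f T) (hT : 0 < T)
    (hmean : ∫ t in a..a + T, f t = 0) (x : ℝ) : |f x| ≤ K * T / 4 := by
  have hneg := hf.neg.le_of_periodic_of_integral_eq_zero (hper.comp Neg.neg) hT
    (a := a) (by simp only [Pi.neg_apply, intervalIntegral.integral_neg, hmean, neg_zero]) x
  exact abs_le.2 ⟨by simp only [Pi.neg_apply] at hneg; linarith,
    hf.le_of_periodic_of_integral_eq_zero hper hT hmean x⟩

theorem Function.Periodic.deriv {f : ℝ → ℝ} {T : ℝ} (hf : Periodic f T) : Periodic (deriv f) T :=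
  fun x => by rw [← deriv_comp_add_const, funext hf]

theorem Function.Periodic.bddAbove_range_abs {g : ℝ → ℝ} {T : ℝ} (hg : Periodic g T)
    (hT : T ≠ 0) (hcont : Continuous g) : BddAbove (range fun x => |g x|) := by
  obtain ⟨C, hC⟩ := isBounded_iff_forall_norm_le.1 (hg.isBounded_of_continuous hT hcont)
  exact ⟨C, forall_mem_range.2 fun x => hC (g x) (mem_range_self x)⟩

theorem ciSup_abs_le_mul_ciSup_abs_deriv_of_periodic {f : ℝ → ℝ} {T a : ℝ}
    (hf : ContDiff ℝ 1 f) (hper : Periodic f T) (hT : 0 < T)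
    (hmean : ∫ t in a..a + T, f t = 0) :
    ⨆ x, |f x| ≤ T / 4 * ⨆ x, |deriv f x| := by
  set M := ⨆ x, |deriv f x|
  have hM : ∀ x, |deriv f x| ≤ M :=
    le_ciSup (hper.deriv.bddAbove_range_abs hT.ne' (hf.continuous_deriv le_rfl))
  have hM0 : 0 ≤ M := (abs_nonneg _).trans (hM 0)
  have hlip : LipschitzWith M.toNNReal f :=
    lipschitzWith_of_nnnorm_deriv_le (hf.differentiable one_ne_zero) fun x => by
      rw [← NNReal.coe_le_coe, coe_nnnorm, Real.coe_toNNReal M hM0]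
      exact hM x
  refine ciSup_le fun x => ?_
  have := hlip.abs_le_of_periodic_of_integral_eq_zero hper hT hmean x
  rw [Real.coe_toNNReal M hM0] at this
  linarith

theorem Function.Odd.intervalIntegral_eq_zero {f : ℝ → ℝ} (hf : f.Odd) (a : ℝ) :
    ∫ x in -a..a, f x = 0 := by
  have h := intervalIntegral.integral_comp_neg (a := -a) (b := a) f
  simp only [hf.eq, intervalIntegral.integral_neg, neg_neg] at h
  linarith

section ArcsinMulSin

variable {r : ℝ}

theorem abs_mul_sin_lt_one (hr : |r| < 1) (x : ℝ) : |r * sin x| < 1 := by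
  rw [abs_mul]
  exact (mul_le_of_le_one_right (abs_nonneg r) (abs_sin_le_one x)).trans_lt hr

theorem contDiff_arcsin_mul_sin (hr : |r| < 1) {n : WithTop ℕ∞} :
    ContDiff ℝ n fun x => arcsin (r * sin x) := by
  refine contDiff_iff_contDiffAt.2 fun x => (contDiffAt_arcsin ?_ ?_).comp x (by fun_prop)
  · linarith [(abs_lt.1 (abs_mul_sin_lt_one hr x)).1]
  · linarith [(abs_lt.1 (abs_mul_sin_lt_one hr x)).2]

theorem hasDerivAt_arcsin_mul_sin (hr : |r| < 1) (x : ℝ) :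
    HasDerivAt (fun x => arcsin (r * sin x)) (r * cos x / √(1 - (r * sin x) ^ 2)) x := by
  have hlt := abs_lt.1 (abs_mul_sin_lt_one hr x)
  have := (hasDerivAt_arcsin (by linarith) (by linarith)).comp x ((hasDerivAt_sin x).const_mul r)
  rwa [one_div_mul_eq_div] at this

theorem abs_deriv_arcsin_mul_sin_le_one (hr : |r| < 1) (x : ℝ) :
    |deriv (fun x => arcsin (r * sin x)) x| ≤ 1 := by
  have hsq : (r * sin x) ^ 2 < 1 := by
    simpa using (sq_lt_one_iff_abs_lt_one _).2 (abs_mul_sin_lt_one hr x)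
  rw [(hasDerivAt_arcsin_mul_sin hr x).deriv, abs_div, abs_of_pos (sqrt_pos.2 (by linarith)),
    div_le_one (sqrt_pos.2 (by linarith))]
  refine abs_le_sqrt ?_
  nlinarith [sin_sq_add_cos_sq x, sq_abs r, abs_nonneg r]

theorem periodic_arcsin_mul_sin : Periodic (fun x => arcsin (r * sin x)) (2 * π) :=
  sin_periodic.comp fun s => arcsin (r * s)

theorem odd_arcsin_mul_sin : Function.Odd fun x => arcsin (r * sin x) := fun x => by
  simp only [sin_neg, mul_neg, arcsin_neg]

end ArcsinMulSin

theorem exists_mul_ciSup_abs_deriv_lt_ciSup_abs {c : ℝ} (hc : c < π / 2) :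
    ∃ f : ℝ → ℝ, Periodic f (2 * π) ∧ ContDiff ℝ 1 f ∧ (∫ t in -π..π, f t) = 0 ∧
      c * ⨆ x, |deriv f x| < ⨆ x, |f x| := by
  obtain ⟨θ, hθc, hθπ⟩ := exists_between (max_lt hc pi_div_two_pos)
  have hθ0 : 0 < θ := (le_max_right c 0).trans_lt hθc
  have hr : |sin θ| < 1 := by
    refine abs_lt.2 ⟨by linarith [sin_pos_of_pos_of_lt_pi hθ0 (by linarith)], ?_⟩
    simpa using sin_lt_sin_of_lt_of_le_pi_div_two (by linarith) le_rfl hθπ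
  refine ⟨_, periodic_arcsin_mul_sin, contDiff_arcsin_mul_sin hr,
    odd_arcsin_mul_sin.intervalIntegral_eq_zero π, ?_⟩
  have hderiv : ⨆ x, |deriv (fun x => arcsin (sin θ * sin x)) x| ∈ Icc 0 1 :=
    ⟨Real.iSup_nonneg fun _ => abs_nonneg _, ciSup_le (abs_deriv_arcsin_mul_sin_le_one hr)⟩
  have hpeak : θ ≤ ⨆ x, |arcsin (sin θ * sin x)| := by
    refine le_ciSup_of_le
      ⟨π / 2, forall_mem_range.2 fun x => abs_le.2 ⟨?_, arcsin_le_pi_div_two _⟩⟩ (π / 2) ?_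
    · linarith [neg_pi_div_two_le_arcsin (sin θ * sin x)]
    · rw [sin_pi_div_two, mul_one, arcsin_sin (by linarith) hθπ.le, abs_of_pos (by linarith)]
  calc c * ⨆ x, |deriv (fun x => arcsin (sin θ * sin x)) x| ≤ max c 0 := by
        rcases le_total 0 c with hc0 | hc0
        · nlinarith [le_max_left c 0, hderiv.1, hderiv.2]
        · nlinarith [le_max_right c 0, hderiv.1, hderiv.2]
    _ < θ := hθc
    _ ≤ _ := hpeak

/-- **Bohr–Favard inequality** for the first derivative.

If `f : ℝ → ℝ` is `2π`-periodic, continuously differentiable, and has zero mean over a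
period, then `sup |f| ≤ (π/2) · sup |f′|`; moreover the constant `π/2` is sharp: for any
`c < π/2` there is such a function `f` with `sup |f| > c · sup |f′|`. -/
theorem bohr_favard_first_derivative :
    (∀ f : ℝ → ℝ, Function.Periodic f (2 * Real.pi) → ContDiff ℝ 1 f →
      (∫ t in (-Real.pi)..Real.pi, f t) = 0 →
      (⨆ x : ℝ, |f x|) ≤ (Real.pi / 2) * ⨆ x : ℝ, |deriv f x|) ∧
    (∀ c : ℝ, c < Real.pi / 2 →
      ∃ f : ℝ → ℝ, Function.Periodic f (2 * Real.pi) ∧ ContDiff ℝ 1 f ∧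
        (∫ t in (-Real.pi)..Real.pi, f t) = 0 ∧
        (⨆ x : ℝ, |f x|) > c * ⨆ x : ℝ, |deriv f x|) := by
  refine ⟨fun f hper hf hmean => ?_, fun c hc => exists_mul_ciSup_abs_deriv_lt_ciSup_abs hc⟩
  have h := ciSup_abs_le_mul_ciSup_abs_deriv_of_periodic hf hper two_pi_pos (a := -π)
    (by rwa [show -π + 2 * π = π by ring])
  rwa [show 2 * π / 4 = π / 2 by ring] at h
end

section
/- Let E be a linear subspace of the space of bounded uniformly continuous functions ℝ → ℂ, closed under uniform convergence and closed under translations (if f ∈ E then f(·+t) ∈ E for every t ∈ ℝ). Let A : E → E be a linear operator that commutes with translations (A(f(·+t)) = (Af)(·+t) for all f ∈ E, t ∈ ℝ) and satisfies sup|Af| ≤ a·sup|f| for all f ∈ E, where a ≥ 0. Then for every p ∈ [1,∞), every N > 0, and every f ∈ E, ‖Af‖_{p,N} ≤ a·‖f‖_{p,N}. -/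
open Real

/-- The norm `‖f‖_{p,N} = sup_{x∈ℝ} (∫_{x−N}^{x+N} |f(t)|^p dt)^{1/p}`. -/
noncomputable def pNNorm (p N : ℝ) (f : ℝ → ℂ) : ℝ :=
  ⨆ x : ℝ, (∫ t in (x - N)..(x + N), ‖f t‖ ^ p) ^ (1 / p)

/-!
Fix a window `I = (x - N, x + N]` and put `F = A f`, `J = ∫_I |F|^p`. By Hahn–Banach,
`v ↦ (A v)(0)` extends from `E` to a functional `Λ` of norm `≤ a` on all bounded continuous
functions, and translation invariance gives `F(t) = Λ(f(· + t))`. Testing `Λ` against the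
superposition `h = ∫_I g(t) f(· + t) dt` with the Hölder extremiser `g = F̄ |F|^(p-2)` gives
`Λ h = J`, while Hölder's inequality on each translated window gives
`‖h‖_∞ ≤ J^(1-1/p) ‖f‖_{p,N}`. Hence `J ≤ a J^(1-1/p) ‖f‖_{p,N}`, that is `J^(1/p) ≤ a ‖f‖_{p,N}`.
-/

open MeasureTheory Set BoundedContinuousFunction

namespace BoundedContinuousFunction

variable {G β : Type*} [SeminormedAddCommGroup G] [PseudoMetricSpace β]

def translate (u : G →ᵇ β) (t : G) : G →ᵇ β :=
  u.compContinuous (ContinuousMap.addRight t)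

theorem norm_translate_le {F : Type*} [SeminormedAddCommGroup F] (u : G →ᵇ F) (t : G) :
    ‖u.translate t‖ ≤ ‖u‖ :=
  norm_compContinuous_le u _

theorem continuous_translate {u : G →ᵇ β} (hu : UniformContinuous u) :
    Continuous u.translate := by
  refine Metric.continuous_iff.2 fun t ε hε => ?_
  obtain ⟨δ, hδ, hu⟩ := Metric.uniformContinuous_iff.1 hu (ε / 2) (half_pos hε)
  refine ⟨δ, hδ, fun s hs =>
    ((dist_le (half_pos hε).le).2 fun x => ?_).trans_lt (half_lt_self hε)⟩
  exact (hu (show dist (x + s) (x + t) < δ by rwa [dist_add_left])).le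

end BoundedContinuousFunction

section DualPow

variable {𝕜 : Type*} [RCLike 𝕜]

/-- The pointwise extremiser for the duality between `Lᵖ` and `Lᵖ'`. -/
noncomputable def dualPow (p : ℝ) (z : 𝕜) : 𝕜 :=
  starRingEnd 𝕜 z * ((‖z‖ ^ (p - 2) : ℝ) : 𝕜)

theorem measurable_dualPow (p : ℝ) : Measurable (dualPow (𝕜 := 𝕜) p) := by
  unfold dualPow
  exact RCLike.continuous_conj.measurable.mul
    (RCLike.measurable_ofReal.comp (measurable_norm.pow_const _))

theorem norm_dualPow_le (p : ℝ) (z : 𝕜) : ‖dualPow p z‖ ≤ ‖z‖ ^ (p - 1) := by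
  rcases eq_or_ne z 0 with rfl | hz
  · simp only [dualPow, map_zero, norm_zero, zero_mul]
    positivity
  · have hz := norm_pos_iff.2 hz
    rw [dualPow, norm_mul, RCLike.norm_conj, RCLike.norm_ofReal, abs_of_nonneg (by positivity),
      show p - 1 = 1 + (p - 2) by ring, Real.rpow_add hz, Real.rpow_one]

theorem dualPow_mul_self {p : ℝ} (hp : p ≠ 0) (z : 𝕜) :
    dualPow p z * z = ((‖z‖ ^ p : ℝ) : 𝕜) := by
  rcases eq_or_ne z 0 with rfl | hz
  · simp [dualPow, Real.zero_rpow hp]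
  · have hz := norm_pos_iff.2 hz
    rw [dualPow, mul_right_comm, RCLike.conj_mul, ← RCLike.ofReal_pow, ← RCLike.ofReal_mul,
      ← Real.rpow_natCast, ← Real.rpow_add hz]
    norm_num

end DualPow

theorem integral_norm_rpow_sub_one_mul_le {α E F : Type*} [MeasurableSpace α] {μ : Measure α}
    [NormedAddCommGroup E] [NormedAddCommGroup F] {p : ℝ} (hp : 1 ≤ p) {f : α → E} {g : α → F}
    (hf : MemLp f (ENNReal.ofReal p) μ) (hg : MemLp g (ENNReal.ofReal p) μ) :
    ∫ a, ‖f a‖ ^ (p - 1) * ‖g a‖ ∂μ ≤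
      (∫ a, ‖f a‖ ^ p ∂μ) ^ (1 - 1 / p) * (∫ a, ‖g a‖ ^ p ∂μ) ^ (1 / p) := by
  rcases hp.eq_or_lt with rfl | hp
  · simp
  have hpq := Real.HolderConjugate.conjExponent hp
  have hf' : MemLp (fun a => ‖f a‖ ^ (p - 1)) (ENNReal.ofReal p.conjExponent) μ := by
    convert hf.norm_rpow_div (ENNReal.ofReal (p - 1)) using 1
    · rw [ENNReal.toReal_ofReal (by linarith)]
    · rw [← ENNReal.ofReal_div_of_pos (by linarith)]; rfl
  calc ∫ a, ‖f a‖ ^ (p - 1) * ‖g a‖ ∂μ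
      ≤ (∫ a, (‖f a‖ ^ (p - 1)) ^ p.conjExponent ∂μ) ^ (1 / p.conjExponent) *
          (∫ a, ‖g a‖ ^ p ∂μ) ^ (1 / p) :=
        integral_mul_le_Lp_mul_Lq_of_nonneg hpq.symm (ae_of_all _ fun _ => by positivity)
          (ae_of_all _ fun a => norm_nonneg (g a)) hf' hg.norm
    _ = _ := by
        simp_rw [← Real.rpow_mul (norm_nonneg _), hpq.sub_one_mul_conj, one_div, hpq.one_sub_inv]

theorem rpow_one_div_le_of_le_mul_rpow {p J c : ℝ} (hp : p ≠ 0) (hJ : 0 ≤ J) (hc : 0 ≤ c)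
    (h : J ≤ c * J ^ (1 - 1 / p)) : J ^ (1 / p) ≤ c := by
  rcases hJ.eq_or_lt with rfl | hJ
  · rwa [Real.zero_rpow (one_div_ne_zero hp)]
  refine le_of_mul_le_mul_right ?_ (Real.rpow_pos_of_pos hJ (1 - 1 / p))
  rwa [← Real.rpow_add hJ, add_sub_cancel, Real.rpow_one]

noncomputable def windowNorm (p N : ℝ) (f : ℝ → ℂ) (x : ℝ) : ℝ :=
  (∫ t in (x - N)..(x + N), ‖f t‖ ^ p) ^ (1 / p)

section WindowNorm

variable {p N : ℝ}

theorem windowNorm_nonneg (hN : 0 ≤ N) (f : ℝ → ℂ) (x : ℝ) : 0 ≤ windowNorm p N f x :=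
  Real.rpow_nonneg (intervalIntegral.integral_nonneg (by linarith) fun _ _ => by positivity) _

theorem pNNorm_nonneg (hN : 0 ≤ N) (f : ℝ → ℂ) : 0 ≤ pNNorm p N f :=
  Real.iSup_nonneg (windowNorm_nonneg hN f)

theorem windowNorm_le_pNNorm {M : ℝ} {f : ℝ → ℂ} (hM : ∀ t, ‖f t‖ ≤ M) (hp : 0 < p)
    (hN : 0 ≤ N) (x : ℝ) : windowNorm p N f x ≤ pNNorm p N f := by
  refine le_ciSup (f := windowNorm p N f) ⟨(M ^ p * (2 * N)) ^ (1 / p), ?_⟩ x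
  rintro _ ⟨y, rfl⟩
  have hle : ‖∫ t in (y - N)..(y + N), ‖f t‖ ^ p‖ ≤ M ^ p * |y + N - (y - N)| :=
    intervalIntegral.norm_integral_le_of_norm_le_const fun t _ => by
      rw [Real.norm_of_nonneg (by positivity)]
      exact Real.rpow_le_rpow (norm_nonneg _) (hM t) hp.le
  have hnonneg : 0 ≤ ∫ t in (y - N)..(y + N), ‖f t‖ ^ p :=
    intervalIntegral.integral_nonneg (by linarith) fun _ _ => by positivity
  rw [Real.norm_of_nonneg hnonneg, show y + N - (y - N) = 2 * N by ring,
    abs_of_nonneg (by linarith)] at hle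
  exact Real.rpow_le_rpow hnonneg hle (by positivity)

theorem setIntegral_rpow_sub_one_mul_translate_le {F : ℝ → ℂ} (u : ℝ →ᵇ ℂ) (hp : 1 ≤ p)
    (hN : 0 ≤ N) {x : ℝ}
    (hF : MemLp F (ENNReal.ofReal p) (volume.restrict (Ioc (x - N) (x + N)))) (y : ℝ) :
    ∫ t in Ioc (x - N) (x + N), ‖F t‖ ^ (p - 1) * ‖u (y + t)‖ ≤
      (∫ t in Ioc (x - N) (x + N), ‖F t‖ ^ p) ^ (1 - 1 / p) * pNNorm p N u := by
  have hu : MemLp (fun t => u (y + t)) (ENNReal.ofReal p)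
      (volume.restrict (Ioc (x - N) (x + N))) :=
    MemLp.of_bound (u.continuous.comp (continuous_const_add y)).aestronglyMeasurable ‖u‖
      (ae_of_all _ fun t => u.norm_coe_le_norm _)
  have hwindow : (∫ t in Ioc (x - N) (x + N), ‖u (y + t)‖ ^ p) ^ (1 / p) =
      windowNorm p N u (y + x) := by
    rw [windowNorm, add_sub_assoc, add_assoc,
      ← intervalIntegral.integral_comp_add_left (fun s => ‖u s‖ ^ p),
      intervalIntegral.integral_of_le (by linarith)]
  calc _ ≤ _ := integral_norm_rpow_sub_one_mul_le hp hF hu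
    _ ≤ _ := by
      rw [hwindow]
      gcongr
      exact windowNorm_le_pNNorm u.norm_coe_le_norm (by linarith) hN _

theorem integrable_smul_translate {μ : Measure ℝ} [IsFiniteMeasure μ] {g : ℝ → ℂ} {C : ℝ}
    (hg : AEStronglyMeasurable g μ) (hgC : ∀ t, ‖g t‖ ≤ C) {u : ℝ →ᵇ ℂ}
    (hu : UniformContinuous u) : Integrable (fun t => g t • u.translate t) μ :=
  Integrable.of_bound (hg.smul (continuous_translate hu).aestronglyMeasurable) (C * ‖u‖)
    (ae_of_all _ fun t => (norm_smul _ _).trans_le <|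
      mul_le_mul (hgC t) (norm_translate_le u t) (norm_nonneg _) ((norm_nonneg _).trans (hgC t)))

theorem windowNorm_functional_translate_le (Λ : (ℝ →ᵇ ℂ) →L[ℂ] ℂ) {u : ℝ →ᵇ ℂ}
    (hu : UniformContinuous u) (hp : 1 ≤ p) (hN : 0 ≤ N) (x : ℝ) :
    windowNorm p N (fun t => Λ (u.translate t)) x ≤ ‖Λ‖ * pNNorm p N u := by
  have hp0 : 0 < p := by linarith
  set F : ℝ → ℂ := fun t => Λ (u.translate t)
  have hF : Continuous F := Λ.continuous.comp (continuous_translate hu)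
  have hFb : ∀ t, ‖F t‖ ≤ ‖Λ‖ * ‖u‖ := fun t =>
    (Λ.le_opNorm _).trans (by gcongr; exact norm_translate_le u t)
  set μ := volume.restrict (Ioc (x - N) (x + N))
  set J := ∫ t, ‖F t‖ ^ p ∂μ with hJ_def
  have hJ : 0 ≤ J := integral_nonneg fun _ => by positivity
  have hP : 0 ≤ pNNorm p N u := pNNorm_nonneg hN u
  set g : ℝ → ℂ := fun t => dualPow p (F t)
  have hg : ∀ t, ‖g t‖ ≤ ‖F t‖ ^ (p - 1) := fun t => norm_dualPow_le p (F t)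
  have hint : Integrable (fun t => g t • u.translate t) μ :=
    integrable_smul_translate (C := (‖Λ‖ * ‖u‖) ^ (p - 1))
      ((measurable_dualPow p).comp hF.measurable).aestronglyMeasurable
      (fun t => (hg t).trans (by gcongr; exact hFb t)) hu
  set h : ℝ →ᵇ ℂ := ∫ t, g t • u.translate t ∂μ
  have hΛh : Λ h = J := by
    rw [← Λ.integral_comp_comm hint, hJ_def, ← integral_complex_ofReal]
    refine integral_congr_ae (ae_of_all _ fun t => ?_)
    dsimp only
    rw [map_smul, smul_eq_mul]
    exact dualPow_mul_self hp0.ne' (F t)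
  have hh : ‖h‖ ≤ J ^ (1 - 1 / p) * pNNorm p N u := by
    refine (norm_le (by positivity)).2 fun y => ?_
    have hy : h y = ∫ t, g t * u (y + t) ∂μ := ((evalCLM ℂ y).integral_comp_comm hint).symm
    rw [hy]
    refine (norm_integral_le_of_norm_le ?_ (ae_of_all _ fun t => ?_)).trans
      (setIntegral_rpow_sub_one_mul_translate_le u hp hN
        (MemLp.of_bound hF.aestronglyMeasurable _ (ae_of_all _ hFb)) y)
    · exact ((hF.norm.rpow_const fun _ => Or.inr (by linarith)).mul
        (u.continuous.comp (continuous_const_add y)).norm).integrableOn_Ioc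
    · rw [norm_mul]
      gcongr
      exact hg t
  rw [windowNorm, intervalIntegral.integral_of_le (by linarith)]
  refine rpow_one_div_le_of_le_mul_rpow hp0.ne' hJ (by positivity) ?_
  calc J = ‖Λ h‖ := by rw [hΛh, Complex.norm_real, Real.norm_of_nonneg hJ]
    _ ≤ ‖Λ‖ * ‖h‖ := Λ.le_opNorm h
    _ ≤ ‖Λ‖ * (J ^ (1 - 1 / p) * pNNorm p N u) := by gcongr
    _ = ‖Λ‖ * pNNorm p N u * J ^ (1 - 1 / p) := by ring

theorem pNNorm_functional_translate_le (Λ : (ℝ →ᵇ ℂ) →L[ℂ] ℂ) {u : ℝ →ᵇ ℂ}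
    (hu : UniformContinuous u) (hp : 1 ≤ p) (hN : 0 ≤ N) :
    pNNorm p N (fun t => Λ (u.translate t)) ≤ ‖Λ‖ * pNNorm p N u :=
  ciSup_le (windowNorm_functional_translate_le Λ hu hp hN)

end WindowNorm

theorem Submodule.exists_extension_norm_le {𝕜 X : Type*} [RCLike 𝕜] [SeminormedAddCommGroup X]
    [NormedSpace 𝕜 X] (S : Submodule 𝕜 X) (φ : X → 𝕜)
    (hadd : ∀ v ∈ S, ∀ w ∈ S, φ (v + w) = φ v + φ w)
    (hsmul : ∀ (c : 𝕜), ∀ v ∈ S, φ (c • v) = c • φ v)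
    {a : ℝ} (ha : 0 ≤ a) (hφ : ∀ v ∈ S, ‖φ v‖ ≤ a * ‖v‖) :
    ∃ Λ : X →L[𝕜] 𝕜, ‖Λ‖ ≤ a ∧ ∀ v ∈ S, Λ v = φ v := by
  let φS : S →ₗ[𝕜] 𝕜 :=
    { toFun := fun v => φ v
      map_add' := fun v w => hadd v v.2 w w.2
      map_smul' := fun c v => hsmul c v v.2 }
  obtain ⟨Λ, hΛ, hnorm⟩ := exists_extension_norm_eq S (φS.mkContinuous a fun v => hφ v v.2)
  exact ⟨Λ, hnorm ▸ LinearMap.mkContinuous_norm_le _ ha _, fun v hv => hΛ ⟨v, hv⟩⟩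

theorem sup_norm_bound_implies_pN_norm_bound_general
    (E : Submodule ℂ (ℝ → ℂ))
    (hbdd : ∀ f ∈ E, ∃ M : ℝ, ∀ x : ℝ, ‖f x‖ ≤ M)
    (huc : ∀ f ∈ E, UniformContinuous f)
    (htrans : ∀ f ∈ E, ∀ t : ℝ, (fun x => f (x + t)) ∈ E)
    (A : (ℝ → ℂ) → (ℝ → ℂ))
    (hmaps : ∀ f ∈ E, A f ∈ E)
    (hadd : ∀ f ∈ E, ∀ g ∈ E, A (f + g) = A f + A g)
    (hsmul : ∀ (c : ℂ), ∀ f ∈ E, A (c • f) = c • A f)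
    (hcomm : ∀ f ∈ E, ∀ t : ℝ, A (fun x => f (x + t)) = fun x => A f (x + t))
    (a : ℝ) (ha : 0 ≤ a)
    (hbound : ∀ f ∈ E, (⨆ x : ℝ, ‖A f x‖) ≤ a * ⨆ x : ℝ, ‖f x‖) :
    ∀ p : ℝ, 1 ≤ p → ∀ N : ℝ, 0 < N → ∀ f ∈ E,
      pNNorm p N (A f) ≤ a * pNNorm p N f := by
  intro p hp N hN f hf
  let S : Submodule ℂ (ℝ →ᵇ ℂ) :=
    E.comap ((ContinuousMap.coeFnLinearMap ℂ).comp (toContinuousMapLinearMap ℝ ℂ ℂ))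
  have hevalA : ∀ v ∈ S, ‖A v 0‖ ≤ a * ‖v‖ := by
    intro v hv
    obtain ⟨M, hM⟩ := hbdd _ (hmaps v hv)
    rw [norm_eq_iSup_norm]
    exact (le_ciSup ⟨M, forall_mem_range.2 hM⟩ 0).trans (hbound v hv)
  obtain ⟨Λ, hΛa, hΛA⟩ := S.exists_extension_norm_le (fun v => A v 0)
    (fun v hv w hw => congrFun (hadd v hv w hw) 0) (fun c v hv => congrFun (hsmul c v hv) 0)
    ha hevalA
  obtain ⟨M, hM⟩ := hbdd f hf
  let u : ℝ →ᵇ ℂ := .ofNormedAddCommGroup f (huc f hf).continuous M hM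
  have hAf : A f = fun t => Λ (u.translate t) := by
    funext t
    rw [hΛA _ (htrans f hf t)]
    change A f t = A (fun x => f (x + t)) 0
    simp only [hcomm f hf t, zero_add]
  calc pNNorm p N (A f) ≤ ‖Λ‖ * pNNorm p N f :=
        hAf ▸ pNNorm_functional_translate_le Λ (huc f hf) hp hN.le
    _ ≤ a * pNNorm p N f := by gcongr; exact pNNorm_nonneg hN.le f

/-- If `E` is a translation-invariant linear space of bounded uniformly continuous functions
on `ℝ`, closed under uniform convergence, and `A` is a linear operator on `E` commuting with
translations with `sup|Af| ≤ a·sup|f|`, then `‖Af‖_{p,N} ≤ a·‖f‖_{p,N}` for all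
`p ∈ [1,∞)`, `N > 0`. -/
theorem sup_norm_bound_implies_pN_norm_bound
    (E : Submodule ℂ (ℝ → ℂ))
    (hbdd : ∀ f ∈ E, ∃ M : ℝ, ∀ x : ℝ, ‖f x‖ ≤ M)
    (huc : ∀ f ∈ E, UniformContinuous f)
    (hclosed : ∀ (F : ℕ → ℝ → ℂ) (f : ℝ → ℂ), (∀ m, F m ∈ E) →
      TendstoUniformly F f Filter.atTop → f ∈ E)
    (htrans : ∀ f ∈ E, ∀ t : ℝ, (fun x => f (x + t)) ∈ E)
    (A : (ℝ → ℂ) → (ℝ → ℂ))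
    (hmaps : ∀ f ∈ E, A f ∈ E)
    (hadd : ∀ f ∈ E, ∀ g ∈ E, A (f + g) = A f + A g)
    (hsmul : ∀ (c : ℂ), ∀ f ∈ E, A (c • f) = c • A f)
    (hcomm : ∀ f ∈ E, ∀ t : ℝ, A (fun x => f (x + t)) = fun x => A f (x + t))
    (a : ℝ) (ha : 0 ≤ a)
    (hbound : ∀ f ∈ E, (⨆ x : ℝ, ‖A f x‖) ≤ a * ⨆ x : ℝ, ‖f x‖) :
    ∀ p : ℝ, 1 ≤ p → ∀ N : ℝ, 0 < N → ∀ f ∈ E,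
      pNNorm p N (A f) ≤ a * pNNorm p N f :=
  sup_norm_bound_implies_pN_norm_bound_general E hbdd huc htrans A hmaps hadd hsmul hcomm a ha
    hbound
end
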